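/- Let u = t^{i1·b1 + j1·b2}⋯t^{im·b1 + jm·b2}·E(k1·b1 + l1·b2)⋯E(kn·b1 + ln·b2) be a monomial in the universal enveloping algebra of the rank-two Heisenberg–Virasoro algebra L. If v0 is a vector in an L-module with E(m)·v0 = t^m·v0 = 0 for all m ∈ ℤ>0·b1 + ℤ>0·b2, then for p1 = 1 − Σ_{i_s < 0} i_s − Σ_{k_t < 0} k_t and p2 = 1 − Σ_{j_s < 0} j_s − Σ_{l_t < 0} l_t, one has E(i·b1 + j·b2)·(u·v0) = t^{i·b1 + j·b2}·(u·v0) = 0 for all (i, j) ≥ (p1, p2). -/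
import Mathlib


/-- det((x1,x2);(y1,y2)) = x1·y2 − x2·y1. -/
def ddet (n m : ℤ × ℤ) : ℤ := n.1 * m.2 - n.2 * m.1

/-- Index set for the basis of the rank-two Heisenberg–Virasoro algebra `L`:
`Sum.inl (true, m)` indexes `E(m)`, `Sum.inl (false, m)` indexes `t^m` (for `m ≠ 0`),
and `Sum.inr j` indexes the central elements `K_{j+1}`, `j = 0,1,2,3`. -/
abbrev LIdx := (Bool × (ℤ × ℤ)) ⊕ (Fin 4)

/-- The underlying ℂ-vector space of the rank-two Heisenberg–Virasoro algebra `L`. -/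
abbrev HV := LIdx →₀ ℂ

noncomputable section

/-- The element `E(m)`, with `E(0) := 0`. -/
def Ee (m : ℤ × ℤ) : HV :=
  if m = 0 then 0 else Finsupp.single (Sum.inl (true, m)) 1

/-- The element `t^m`, with `t^0 := 0`. -/
def tm (m : ℤ × ℤ) : HV :=
  if m = 0 then 0 else Finsupp.single (Sum.inl (false, m)) 1

/-- The central elements `K_1, K_2, K_3, K_4`. -/
def Kk (j : Fin 4) : HV := Finsupp.single (Sum.inr j) 1

/-- `h(m) = m1·K1 + m2·K2`. -/
def hh (m : ℤ × ℤ) : HV := m.1 • Kk 0 + m.2 • Kk 1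

/-- `f(m) = m1·K3 + m2·K4`. -/
def ff (m : ℤ × ℤ) : HV := m.1 • Kk 2 + m.2 • Kk 3

/-- The bracket of `L` on basis elements:
`[t^m, t^n] = 0`, `[K_i, L] = 0`,
`[t^m, E(n)] = det(n;m)·t^{m+n} + δ_{m+n,0}·h(m)`,
`[E(m), E(n)] = det(n;m)·E(m+n) + δ_{m+n,0}·f(m)`. -/
def brB : LIdx → LIdx → HV
  | Sum.inl (true, m), Sum.inl (true, n) =>
      (ddet n m) • Ee (m + n) + (if m + n = 0 then ff m else 0)
  | Sum.inl (false, m), Sum.inl (true, n) =>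
      (ddet n m) • tm (m + n) + (if m + n = 0 then hh m else 0)
  | Sum.inl (true, m), Sum.inl (false, n) =>
      -((ddet m n) • tm (n + m) + (if n + m = 0 then hh n else 0))
  | Sum.inl (false, _), Sum.inl (false, _) => 0
  | Sum.inr _, _ => 0
  | _, Sum.inr _ => 0

/-- The bracket of `L`, extended bilinearly to all of `L`. -/
def br (x y : HV) : HV :=
  x.sum fun i a => y.sum fun j b => (a * b) • brB i j

end

/-- `{b1, b2}` is a ℤ-basis of ℤ². -/
def IsZBasis (b1 b2 : ℤ × ℤ) : Prop :=
  ∀ v : ℤ × ℤ, ∃! c : ℤ × ℤ, c.1 • b1 + c.2 • b2 = v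


lemma br_single (i j : LIdx) (a b : ℂ) :
    br (Finsupp.single i a) (Finsupp.single j b) = (a * b) • brB i j := by
  classical
  simp [br, Finsupp.sum_single_index]

lemma br_Ee_Ee {m n : ℤ × ℤ} (hm : m ≠ 0) (hn : n ≠ 0) (hmn : m + n ≠ 0) :
    br (Ee m) (Ee n) = (ddet n m) • Ee (m + n) := by
  simp [Ee, br_single, brB, hm, hn, hmn]

lemma br_tm_Ee {m n : ℤ × ℤ} (hm : m ≠ 0) (hn : n ≠ 0) (hmn : m + n ≠ 0) :
    br (tm m) (Ee n) = (ddet n m) • tm (m + n) := by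
  simp [Ee, tm, br_single, brB, hm, hn, hmn]

lemma br_Ee_tm {m n : ℤ × ℤ} (hm : m ≠ 0) (hn : n ≠ 0) (hnm : n + m ≠ 0) :
    br (Ee m) (tm n) = -((ddet m n) • tm (n + m)) := by
  simp [Ee, tm, br_single, brB, hm, hn, hnm]

lemma br_tm_tm {m n : ℤ × ℤ} (hm : m ≠ 0) (hn : n ≠ 0) :
    br (tm m) (tm n) = 0 := by
  simp [tm, br_single, brB, hm, hn]

lemma negsum_nonpos (l : List ℤ) : (l.filter fun z => decide (z < 0)).sum ≤ 0 := by
  induction l with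
  | nil => simp
  | cons a t ih => by_cases h : a < 0 <;> simp [List.filter_cons, h] <;> omega

def P1L (L : List (Bool × ℤ × ℤ)) : ℤ :=
  1 - ((L.map fun x => x.2.1).filter fun z => decide (z < 0)).sum
def P2L (L : List (Bool × ℤ × ℤ)) : ℤ :=
  1 - ((L.map fun x => x.2.2).filter fun z => decide (z < 0)).sum

lemma P1L_cons (a : Bool × ℤ × ℤ) (L : List (Bool × ℤ × ℤ)) :
    P1L (a :: L) = P1L L - (if a.2.1 < 0 then a.2.1 else 0) := by
  by_cases h : a.2.1 < 0 <;> simp [P1L, List.filter_cons, h] <;> ring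

lemma P2L_cons (a : Bool × ℤ × ℤ) (L : List (Bool × ℤ × ℤ)) :
    P2L (a :: L) = P2L L - (if a.2.2 < 0 then a.2.2 else 0) := by
  by_cases h : a.2.2 < 0 <;> simp [P2L, List.filter_cons, h] <;> ring

lemma P1L_ge_one (L : List (Bool × ℤ × ℤ)) : 1 ≤ P1L L := by
  have := negsum_nonpos (L.map fun x => x.2.1); unfold P1L; omega

lemma P2L_ge_one (L : List (Bool × ℤ × ℤ)) : 1 ≤ P2L L := by
  have := negsum_nonpos (L.map fun x => x.2.2); unfold P2L; omega

lemma key {V : Type*} [AddCommGroup V] [Module ℂ V]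
    (act : HV →ₗ[ℂ] Module.End ℂ V)
    (hrep : ∀ x y : HV, act (br x y) = act x * act y - act y * act x)
    (b1 b2 : ℤ × ℤ) (hbasis : IsZBasis b1 b2) (v0 : V)
    (hv0 : ∀ i j : ℤ, 1 ≤ i → 1 ≤ j →
      act (Ee (i • b1 + j • b2)) v0 = 0 ∧ act (tm (i • b1 + j • b2)) v0 = 0)
    (L : List (Bool × ℤ × ℤ)) :
    ∀ i j : ℤ, P1L L ≤ i → P2L L ≤ j →
      act (Ee (i • b1 + j • b2))
        (L.foldr (fun x v => act (if x.1 then Ee (x.2.1 • b1 + x.2.2 • b2)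
          else tm (x.2.1 • b1 + x.2.2 • b2)) v) v0) = 0 ∧
      act (tm (i • b1 + j • b2))
        (L.foldr (fun x v => act (if x.1 then Ee (x.2.1 • b1 + x.2.2 • b2)
          else tm (x.2.1 • b1 + x.2.2 • b2)) v) v0) = 0 := by
  have hne : ∀ i j : ℤ, 1 ≤ i → i • b1 + j • b2 ≠ 0 := by
    intro i j hi h
    have h0 : ((0:ℤ), (0:ℤ)).1 • b1 + ((0:ℤ), (0:ℤ)).2 • b2 = 0 := by simp
    have h' : ((i, j) : ℤ × ℤ).1 • b1 + ((i, j) : ℤ × ℤ).2 • b2 = 0 := h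
    have := (hbasis 0).unique h' h0
    simp [Prod.ext_iff] at this
    omega
  have hcomm : ∀ (X Y : HV) (v : V),
      act X (act Y v) = act (br X Y) v + act Y (act X v) := by
    intro X Y v
    have h2 := congrArg (fun f => f v) (hrep X Y)
    simp only [LinearMap.sub_apply, Module.End.mul_apply] at h2
    rw [h2]; abel
  induction L with
  | nil =>
    intro i j hi hj
    exact hv0 i j (le_trans (P1L_ge_one []) hi) (le_trans (P2L_ge_one []) hj)
  | cons a L' ih =>
    intro i j hi hj
    obtain ⟨ab, k, l⟩ := a
    simp only [List.foldr_cons]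
    set w' : V := (L'.foldr (fun x v => act (if x.1 then Ee (x.2.1 • b1 + x.2.2 • b2)
          else tm (x.2.1 • b1 + x.2.2 • b2)) v) v0) with hw'
    have hP1 := P1L_cons (ab, k, l) L'
    have hP2 := P2L_cons (ab, k, l) L'
    have h1 : P1L L' ≤ i ∧ P1L L' ≤ i + k := by
      by_cases hk : k < 0 <;> simp [hk] at hP1 <;> omega
    have h2 : P2L L' ≤ j ∧ P2L L' ≤ j + l := by
      by_cases hl : l < 0 <;> simp [hl] at hP2 <;> omega
    have hi1 : 1 ≤ i := le_trans (P1L_ge_one _) hi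
    have hj1 : 1 ≤ j := le_trans (P2L_ge_one _) hj
    have ihm := ih i j h1.1 h2.1
    have ihmn := ih (i + k) (j + l) h1.2 h2.2
    have hm : i • b1 + j • b2 ≠ 0 := hne i j hi1
    have hsum : (i • b1 + j • b2) + (k • b1 + l • b2) = (i + k) • b1 + (j + l) • b2 := by
      simp [add_smul]; abel
    have hmn : (i • b1 + j • b2) + (k • b1 + l • b2) ≠ 0 := by
      rw [hsum]
      exact hne _ _ (le_trans (P1L_ge_one L') h1.2)
    by_cases hn : k • b1 + l • b2 = 0
    · have hE0 : Ee (k • b1 + l • b2) = 0 := by rw [Ee, if_pos hn]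
      have ht0 : tm (k • b1 + l • b2) = 0 := by rw [tm, if_pos hn]
      cases ab <;>
        simp only [if_true, Bool.false_eq_true, if_false, hE0, ht0, map_zero,
          LinearMap.zero_apply, and_self]
    · cases ab
      · -- factor t^n
        simp only [Bool.false_eq_true, if_false]
        have hEmn : act (tm ((k • b1 + l • b2) + (i • b1 + j • b2))) w' = 0 := by
          rw [add_comm, hsum]; exact ihmn.2
        constructor
        · rw [hcomm, ihm.1, map_zero, add_zero,
            br_Ee_tm hm hn (by rw [add_comm]; exact hmn),
            map_neg, map_zsmul, LinearMap.neg_apply, LinearMap.smul_apply,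
            hEmn, smul_zero, neg_zero]
        · rw [hcomm, ihm.2, map_zero, add_zero, br_tm_tm hm hn, map_zero,
            LinearMap.zero_apply]
      · -- factor E(n)
        simp only [if_true]
        have hEmn : act (Ee ((i • b1 + j • b2) + (k • b1 + l • b2))) w' = 0 := by
          rw [hsum]; exact ihmn.1
        have htmn : act (tm ((i • b1 + j • b2) + (k • b1 + l • b2))) w' = 0 := by
          rw [hsum]; exact ihmn.2
        constructor
        · rw [hcomm, ihm.1, map_zero, add_zero, br_Ee_Ee hm hn hmn, map_zsmul,
            LinearMap.smul_apply, hEmn, smul_zero]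
        · rw [hcomm, ihm.2, map_zero, add_zero, br_tm_Ee hm hn hmn, map_zsmul,
            LinearMap.smul_apply, htmn, smul_zero]
theorem monomial_image_annihilated
    (V : Type*) [AddCommGroup V] [Module ℂ V]
    -- V is a module over L
    (act : HV →ₗ[ℂ] Module.End ℂ V)
    (hrep : ∀ x y : HV, act (br x y) = act x * act y - act y * act x)
    (b1 b2 : ℤ × ℤ) (hbasis : IsZBasis b1 b2)
    -- v0 is a generalized highest weight vector:
    -- E(m)·v0 = t^m·v0 = 0 for all m ∈ ℤ>0·b1 + ℤ>0·b2
    (v0 : V)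
    (hv0 : ∀ i j : ℤ, 1 ≤ i → 1 ≤ j →
      act (Ee (i • b1 + j • b2)) v0 = 0 ∧ act (tm (i • b1 + j • b2)) v0 = 0)
    -- the exponent data of the monomial
    -- u = t^{i1·b1+j1·b2}⋯t^{im·b1+jm·b2}·E(k1·b1+l1·b2)⋯E(kn·b1+ln·b2)
    (ts es : List (ℤ × ℤ)) :
    -- with w = u·v0 and p1, p2 as below,
    let w : V :=
      ((ts.map fun p => act (tm (p.1 • b1 + p.2 • b2))) ++
        (es.map fun p => act (Ee (p.1 • b1 + p.2 • b2)))).foldr (fun f x => f x) v0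
    let p1 : ℤ := 1 - (((ts.map Prod.fst).filter fun z => decide (z < 0)).sum +
      ((es.map Prod.fst).filter fun z => decide (z < 0)).sum)
    let p2 : ℤ := 1 - (((ts.map Prod.snd).filter fun z => decide (z < 0)).sum +
      ((es.map Prod.snd).filter fun z => decide (z < 0)).sum)
    -- E(i·b1+j·b2)·w = t^{i·b1+j·b2}·w = 0 for all (i,j) ≥ (p1,p2)
    ∀ i j : ℤ, p1 ≤ i → p2 ≤ j →
      act (Ee (i • b1 + j • b2)) w = 0 ∧ act (tm (i • b1 + j • b2)) w = 0 := by
  intro w p1 p2 i j hi hj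
  classical
  set L : List (Bool × ℤ × ℤ) :=
    (ts.map fun p => ((false, p) : Bool × ℤ × ℤ)) ++
      (es.map fun p => ((true, p) : Bool × ℤ × ℤ)) with hL
  have hw : w = L.foldr (fun x v => act (if x.1 then Ee (x.2.1 • b1 + x.2.2 • b2)
      else tm (x.2.1 • b1 + x.2.2 • b2)) v) v0 := by
    show (((ts.map fun p => act (tm (p.1 • b1 + p.2 • b2))) ++
        (es.map fun p => act (Ee (p.1 • b1 + p.2 • b2)))).foldr (fun f x => f x) v0) = _
    simp [hL, List.foldr_append, List.foldr_map]
  have hp1 : P1L L = p1 := by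
    show _ = 1 - (((ts.map Prod.fst).filter fun z => decide (z < 0)).sum +
      ((es.map Prod.fst).filter fun z => decide (z < 0)).sum)
    simp [P1L, hL, List.map_append, List.map_map, List.filter_append, Function.comp]
    rfl
  have hp2 : P2L L = p2 := by
    show _ = 1 - (((ts.map Prod.snd).filter fun z => decide (z < 0)).sum +
      ((es.map Prod.snd).filter fun z => decide (z < 0)).sum)
    simp [P2L, hL, List.map_append, List.map_map, List.filter_append, Function.comp]
    rfl
  rw [hw]
  exact key act hrep b1 b2 hbasis v0 hv0 L i j (hp1 ▸ hi) (hp2 ▸ hj)
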